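/- Let F be a finite field of odd cardinality q with quadratic character χ. For distinct m₁, m₂ ∈ F and any shift (u,v), the cross-correlation ∑_{x,y} S_{m₁}(x,y)·S_{m₂}(x+u,y+v) equals q·χ(x₀)·χ(x₀+u) - ∑_{x} χ(x)·χ(x+u), where x₀ ∈ F is the unique solution of (m₂−m₁)·x₀ + m₂·u + v = 0. -/

import Mathlib

/-! For fixed `x`, the substitution `t = m₁ x + y` turns the inner sum into
`χ x * χ (x + u) * ∑ t, χ t * χ (t + c)` with `c = (m₂ - m₁) (x - x₀)`. This autocorrelation of a
nontrivial character is `q - 1` at `c = 0` and `-1` otherwise, so every `x` contributes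
`-χ x * χ (x + u)` and `x = x₀` contributes an extra `q * χ x₀ * χ (x₀ + u)`. -/

open Finset

namespace MulChar

variable {F R : Type*} [Field F] [Fintype F] [CommRing R]

lemma sum_mul_inv_apply_self [DecidableEq F] (χ : MulChar F R) :
    ∑ t, χ t * χ⁻¹ t = Fintype.card F - 1 := by
  simp only [← mul_apply, mul_inv_cancel, sum_one_eq_card_units,
    Fintype.card_eq_card_units_add_one (α := F), Nat.cast_add, Nat.cast_one, add_sub_cancel_right]

/-- Substituting `t = -c x` turns the sum into `χ (-1) * J(χ, χ⁻¹)`. -/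
lemma sum_mul_inv_apply_add_of_ne_zero [IsDomain R] {χ : MulChar F R} (hχ : χ ≠ 1)
    {c : F} (hc : c ≠ 0) : ∑ t, χ t * χ⁻¹ (t + c) = -1 := by
  have hunit : χ c * χ⁻¹ c = 1 := by
    rw [inv_apply', ← map_mul, mul_inv_cancel₀ hc, map_one]
  calc ∑ t, χ t * χ⁻¹ (t + c)
      = ∑ x, χ (-c * x) * χ⁻¹ (-c * x + c) :=
        (Fintype.sum_equiv (Equiv.mulLeft₀ (-c) (neg_ne_zero.2 hc)) _ _ fun _ ↦ rfl).symm
    _ = ∑ x, χ (-1) * (χ x * χ⁻¹ (1 - x)) := by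
        refine sum_congr rfl fun x _ ↦ ?_
        rw [show -c * x + c = c * (1 - x) by ring, show -c * x = -1 * c * x by ring]
        simp only [map_mul]
        linear_combination (χ (-1) * χ x * χ⁻¹ (1 - x)) * hunit
    _ = χ (-1) * jacobiSum χ χ⁻¹ := by rw [jacobiSum, mul_sum]
    _ = -1 := by
        rw [jacobiSum_nontrivial_inv hχ, mul_neg, ← map_mul, neg_one_mul, neg_neg, map_one]

lemma sum_mul_inv_apply_add [DecidableEq F] [IsDomain R] {χ : MulChar F R} (hχ : χ ≠ 1) (c : F) :
    ∑ t, χ t * χ⁻¹ (t + c) = (if c = 0 then (Fintype.card F : R) else 0) - 1 := by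
  split_ifs with hc
  · simpa [hc] using χ.sum_mul_inv_apply_self
  · rw [zero_sub, sum_mul_inv_apply_add_of_ne_zero hχ hc]

end MulChar

lemma quadraticChar_sum_mul_apply_add {F : Type*} [Field F] [Fintype F] [DecidableEq F]
    (hF : ringChar F ≠ 2) (c : F) :
    ∑ t, quadraticChar F t * quadraticChar F (t + c)
      = (if c = 0 then (Fintype.card F : ℤ) else 0) - 1 := by
  conv_lhs => enter [2, t, 2]; rw [← (quadraticChar_isQuadratic F).inv]
  exact MulChar.sum_mul_inv_apply_add (quadraticChar_ne_one hF) c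

theorem crosscorrelation_formula
    (F : Type*) [Field F] [Fintype F] [DecidableEq F]
    (hodd : Odd (Fintype.card F))
    (χ : F → ℤ) (hχ : ∀ x, χ x = quadraticChar F x)
    (S : F → F × F → ℤ) (hS : ∀ m x y, S m (x, y) = χ x * χ (m * x + y))
    (m₁ m₂ : F) (hm : m₁ ≠ m₂) (u v : F)
    (x₀ : F) (hx₀ : (m₂ - m₁) * x₀ + m₂ * u + v = 0) :
    ∑ x : F, ∑ y : F, S m₁ (x, y) * S m₂ (x + u, y + v) =
      (Fintype.card F : ℤ) * χ x₀ * χ (x₀ + u) - ∑ x : F, χ x * χ (x + u) := by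
  have hF : ringChar F ≠ 2 := by
    rw [Ne, FiniteField.even_card_iff_char_two, ← Nat.even_iff, Nat.not_even_iff_odd]
    exact hodd
  have inner (x : F) : ∑ y, S m₁ (x, y) * S m₂ (x + u, y + v)
      = χ x * χ (x + u) * ((if x = x₀ then (Fintype.card F : ℤ) else 0) - 1) := by
    have hshift (y : F) : m₂ * (x + u) + (y + v) = (m₁ * x + y) + (m₂ - m₁) * (x - x₀) := by
      linear_combination hx₀
    have hc : (m₂ - m₁) * (x - x₀) = 0 ↔ x = x₀ := by
      simp [sub_eq_zero, hm.symm]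
    calc ∑ y, S m₁ (x, y) * S m₂ (x + u, y + v)
        = χ x * χ (x + u) * ∑ y, χ (m₁ * x + y) * χ ((m₁ * x + y) + (m₂ - m₁) * (x - x₀)) := by
          simp only [hS, hshift, mul_sum]
          exact sum_congr rfl fun y _ ↦ by ring
      _ = χ x * χ (x + u) * ∑ t, χ t * χ (t + (m₂ - m₁) * (x - x₀)) := by
          congr 1
          exact Fintype.sum_equiv (Equiv.addLeft (m₁ * x)) _ _ fun _ ↦ rfl
      _ = _ := by
          simp only [hχ, quadraticChar_sum_mul_apply_add hF, hc]
  simp only [inner, mul_sub, mul_one, mul_ite, mul_zero, sum_sub_distrib, sum_ite_eq', mem_univ,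
    if_true]
  ring
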